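/- arXiv:2603.29863 — 4 statements merged into one kernel-verified Lean document; each statement's English description precedes it below -/
import Mathlib

section
/- Let V be a real Hilbert space, U a real normed space, b : U × V → ℝ a bounded bilinear form, and L : V → ℝ a continuous linear functional. Let Θ : U → V be the trial-to-test operator defined via the Riesz representation by ⟨Θ w, v⟩ = b(w, v) for all v ∈ V. Let M ⊆ U be a linear subspace and u ∈ M. Then u minimizes the dual residual w ↦ ‖B w − L‖_{V*} := sup{|b(w, v) − L(v)| : v ∈ V, ‖v‖ ≤ 1} over M if and only if b(u, Θ w) = L(Θ w) for all w ∈ M. (This is the equivalence, asserted in Section 2, between minimizing the residual ‖B·−L‖_{V*} and solving the Petrov–Galerkin problem (2.3) with optimal test functions; applied with M = U it gives the continuous formulation and with M = U_h and V replaced by V_h the discrete DPG scheme.) -/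
/-!
By Riesz representation, `L = ⟪r, ·⟫` for some `r ∈ V` and `b w = ⟪Θ w, ·⟫`, so the dual
residual `‖b w - L‖` equals the Hilbert-space distance `‖Θ w - r‖`. Minimizing it over `M`
is therefore best approximation of `r` from the subspace `Θ M`, which is characterized by
orthogonality of the error `Θ u - r` to `Θ M`; and `⟪Θ u - r, Θ w⟫ = b u (Θ w) - L (Θ w)`.
-/

open InnerProductSpace

section BestApproximation

variable {F : Type*} [NormedAddCommGroup F] [InnerProductSpace ℝ F]

theorem Submodule.forall_norm_sub_le_iff_real_inner_eq_zero (K : Submodule ℝ F) {x r : F}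
    (hx : x ∈ K) : (∀ y ∈ K, ‖x - r‖ ≤ ‖y - r‖) ↔ ∀ y ∈ K, ⟪x - r, y⟫_ℝ = 0 := by
  have hbdd : BddBelow (Set.range fun y : (K : Set F) ↦ ‖r - y‖) :=
    ⟨0, by rintro _ ⟨y, rfl⟩; exact norm_nonneg _⟩
  have hmin : (∀ y ∈ K, ‖x - r‖ ≤ ‖y - r‖) ↔ ‖r - x‖ = ⨅ y : (K : Set F), ‖r - y‖ := by
    simp only [norm_sub_rev _ r]
    refine ⟨fun h ↦ le_antisymm (le_ciInf fun y ↦ h y y.2) (ciInf_le hbdd ⟨x, hx⟩),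
      fun h y hy ↦ h ▸ ciInf_le hbdd ⟨y, hy⟩⟩
  rw [hmin, K.norm_eq_iInf_iff_real_inner_eq_zero hx]
  refine forall₂_congr fun y _ ↦ ?_
  rw [← neg_sub x r, inner_neg_left, neg_eq_zero]

theorem LinearMap.forall_norm_sub_le_iff_real_inner_eq_zero {U : Type*} [AddCommGroup U]
    [Module ℝ U] (T : U →ₗ[ℝ] F) (M : Submodule ℝ U) (r : F) {u : U} (hu : u ∈ M) :
    (∀ w ∈ M, ‖T u - r‖ ≤ ‖T w - r‖) ↔ ∀ w ∈ M, ⟪T u - r, T w⟫_ℝ = 0 := by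
  simpa only [Submodule.mem_map, forall_exists_index, and_imp, forall_apply_eq_imp_iff₂] using
    (M.map T).forall_norm_sub_le_iff_real_inner_eq_zero (r := r) (Submodule.mem_map_of_mem hu)

end BestApproximation

theorem norm_eq_of_forall_inner_eq {𝕜 E : Type*} [RCLike 𝕜] [NormedAddCommGroup E]
    [InnerProductSpace 𝕜 E] {x : E} {f : StrongDual 𝕜 E} (h : ∀ v, ⟪x, v⟫_𝕜 = f v) :
    ‖f‖ = ‖x‖ := by
  have hf : toDualMap 𝕜 E x = f := ContinuousLinearMap.ext h
  rw [← hf, (toDualMap 𝕜 E).norm_map]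

theorem isLinearMap_of_forall_inner_eq {U V : Type*} [NormedAddCommGroup U] [NormedSpace ℝ U]
    [NormedAddCommGroup V] [InnerProductSpace ℝ V] {b : U →L[ℝ] V →L[ℝ] ℝ} {Θ : U → V}
    (hΘ : ∀ w v, ⟪Θ w, v⟫_ℝ = b w v) : IsLinearMap ℝ Θ where
  map_add x y := ext_inner_right ℝ fun v ↦ by simp only [hΘ, inner_add_left, map_add,
    add_apply]
  map_smul c x := ext_inner_right ℝ fun v ↦ by simp only [hΘ, real_inner_smul_left, map_smul,
    smul_apply, smul_eq_mul]

/-- equivalence of residual minimization and the Petrov–Galerkin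
problem with optimal test functions, Section 2.  Let `V` be a real Hilbert space,
`U` a real normed space, `b : U × V → ℝ` a bounded bilinear form (encoded as
`b : U →L[ℝ] V →L[ℝ] ℝ`), `L ∈ V*`, and `Θ : U → V` the trial-to-test operator
defined via Riesz representation by `⟨Θ w, v⟩ = b (w, v)` for all `v ∈ V`.  Let
`M ⊆ U` be a subspace and `u ∈ M`.  Then `u` minimizes `w ↦ ‖B w − L‖_{V*}` over `M`
if and only if `b (u, Θ w) = L (Θ w)` for all `w ∈ M`. -/
theorem stmt_4
    {U V : Type*}
    [NormedAddCommGroup U] [NormedSpace ℝ U]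
    [NormedAddCommGroup V] [InnerProductSpace ℝ V] [CompleteSpace V]
    (b : U →L[ℝ] V →L[ℝ] ℝ) (L : V →L[ℝ] ℝ)
    (Θ : U → V) (hΘ : ∀ (w : U) (v : V), (inner ℝ (Θ w) v : ℝ) = b w v)
    (M : Submodule ℝ U) (u : U) (hu : u ∈ M) :
    (∀ w ∈ M, ‖b u - L‖ ≤ ‖b w - L‖) ↔ (∀ w ∈ M, b u (Θ w) = L (Θ w)) := by
  set r := (toDual ℝ V).symm L
  have hr : ∀ v, ⟪r, v⟫_ℝ = L v := fun _ ↦ toDual_symm_apply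
  have hnorm : ∀ w, ‖b w - L‖ = ‖Θ w - r‖ := fun w ↦ norm_eq_of_forall_inner_eq fun v ↦ by
    rw [inner_sub_left, hΘ, hr, sub_apply]
  have hresidual : ∀ w, ⟪Θ u - r, Θ w⟫_ℝ = b u (Θ w) - L (Θ w) := fun w ↦ by
    rw [inner_sub_left, hΘ, hr]
  simp only [hnorm, ← sub_eq_zero (a := b u _), ← hresidual]
  exact (isLinearMap_of_forall_inner_eq hΘ).mk'.forall_norm_sub_le_iff_real_inner_eq_zero M r hu
end

section
/- Let V be a real Hilbert space, V_h ⊆ V a complete subspace (for instance finite-dimensional), U a real normed space, B : U → V* a continuous linear map, and L ∈ V*. Define the discrete trial-to-test operator Θ_h : U → V_h by ⟨Θ_h w, v_h⟩ = (B w)(v_h) for all v_h ∈ V_h (Riesz representation on V_h). Then the function J_lin : U → ℝ, J_lin(w) := ‖B w − L‖_{V_h*}² where ‖F‖_{V_h*} := sup{|F(v_h)| : v_h ∈ V_h, ‖v_h‖ ≤ 1}, is Fréchet differentiable, and its derivative at u ∈ U is the continuous linear functional w ↦ 2 ((B u)(Θ_h w) − L(Θ_h w)). (This identity yields the linear part of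 the Euler–Lagrange equations (4.2) of the discrete minimum residual method.) -/
/-! The Riesz map `R : V_h* → V_h` is a linear isometry, so `J_lin w = ‖R ((B w - L)|_{V_h})‖²` is the
squared Hilbert norm of an affine map of `w`, with derivative `w ↦ 2 ⟪R ((B u - L)|_{V_h}), R ((B w)|_{V_h})⟫`.
This is `2 (B u - L)(R ((B w)|_{V_h}))`, and `R ((B w)|_{V_h}) = Θ_h w` by the defining property of `Θ_h`. -/

open InnerProductSpace

theorem InnerProductSpace.toDual_symm_eq_of_forall_inner {𝕜 E : Type*} [RCLike 𝕜]
    [NormedAddCommGroup E] [InnerProductSpace 𝕜 E] [CompleteSpace E]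
    {F : StrongDual 𝕜 E} {x : E} (h : ∀ v, inner 𝕜 x v = F v) : (toDual 𝕜 E).symm F = x := by
  rw [LinearIsometryEquiv.symm_apply_eq]
  ext v
  simp [h]

theorem HasFDerivAt.norm_sq_strongDual {E H : Type*} [NormedAddCommGroup E] [NormedSpace ℝ E]
    [NormedAddCommGroup H] [InnerProductSpace ℝ H] [CompleteSpace H]
    {f : E → StrongDual ℝ H} {f' : E →L[ℝ] StrongDual ℝ H} {u : E} (hf : HasFDerivAt f f' u) :
    HasFDerivAt (fun w => ‖f w‖ ^ 2)
      (2 • (f u).comp (((toDual ℝ H).symm.toContinuousLinearEquiv :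
        StrongDual ℝ H ≃L[ℝ] H).toContinuousLinearMap.comp f')) u := by
  set R : StrongDual ℝ H ≃L[ℝ] H := (toDual ℝ H).symm.toContinuousLinearEquiv
  have hR : HasFDerivAt (fun w => R (f w)) (R.toContinuousLinearMap.comp f') u :=
    R.hasFDerivAt.comp u hf
  convert hR.norm_sq using 1
  · ext w; simp [R]
  · ext w; simp [R, toDual_symm_apply]

/-- differentiability of the discrete linear residual, giving the
linear part of the Euler–Lagrange equations (4.2).  Let `V` be a real Hilbert space,
`V_h ⊆ V` a complete subspace, `U` a real normed space, `B : U → V*` continuous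
linear, `L ∈ V*`, and `Θ_h : U → V_h` the discrete trial-to-test operator defined by
`⟨Θ_h w, v_h⟩ = (B w)(v_h)` for all `v_h ∈ V_h`.  Then
`J_lin (w) := ‖B w − L‖_{V_h*}²` (with `‖F‖_{V_h*}` the operator norm of the
restriction of `F` to `V_h`) is Fréchet differentiable and its derivative at `u` is
the continuous linear functional `w ↦ 2 ((B u)(Θ_h w) − L (Θ_h w))`. -/
theorem stmt_5
    {U V : Type*}
    [NormedAddCommGroup U] [NormedSpace ℝ U]
    [NormedAddCommGroup V] [InnerProductSpace ℝ V]
    (Vh : Submodule ℝ V) [CompleteSpace Vh]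
    (B : U →L[ℝ] (V →L[ℝ] ℝ)) (L : V →L[ℝ] ℝ)
    (Θh : U → V) (hmem : ∀ w : U, Θh w ∈ Vh)
    (hΘ : ∀ (w : U), ∀ v ∈ Vh, (inner ℝ (Θh w) v : ℝ) = B w v) :
    ∀ u : U, ∃ D : U →L[ℝ] ℝ,
      (∀ w : U, D w = 2 * ((B u) (Θh w) - L (Θh w))) ∧
      HasFDerivAt (fun w : U => ‖(B w - L).comp Vh.subtypeL‖ ^ 2) D u := by
  intro u
  have hres : HasFDerivAt (fun w => (B w - L).comp Vh.subtypeL)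
      (((ContinuousLinearMap.compL ℝ Vh V ℝ).flip Vh.subtypeL).comp B) u :=
    ((ContinuousLinearMap.compL ℝ Vh V ℝ).flip Vh.subtypeL).hasFDerivAt.comp u
      (B.hasFDerivAt.sub_const L)
  refine ⟨_, fun w => ?_, hres.norm_sq_strongDual⟩
  have hRiesz : (toDual ℝ Vh).symm ((B w).comp Vh.subtypeL) = ⟨Θh w, hmem w⟩ :=
    toDual_symm_eq_of_forall_inner fun v => hΘ w v v.2
  simp [hRiesz]
end

section
/- Let U₁, U₂ be real Banach spaces, V a real normed space, V_h ⊆ V a subspace, and B : U₁ × U₂ → V* a continuous linear map such that B₁ : U₁ → V*, B₁ x := B(x, 0), is an isomorphism. Let U_h ⊆ U₁ × U₂ be a subspace and suppose there is a constant C_F > 0 such that ‖B w_h‖_{V*} ≤ C_F ‖B w_h‖_{V_h*} for all w_h ∈ U_h, where ‖F‖_{V_h*} := sup{|F(v_h)| : v_h ∈ V_h, ‖v_h‖ ≤ 1}. Then there is a constant C > 0, depending only on ‖B₁⁻¹‖, ‖B‖ and C_F, such that every w_h = (x, y) ∈ U_h satisfies ‖(x, y)‖ ≤ C (‖B(x,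 y)‖_{V_h*} + ‖y‖). (This is the discrete stability estimate (3.3) in the proof of Theorem 3.1: the norm of a discrete function is controlled by its discrete residual plus the norms of its auxiliary components.) -/
set_option synthInstance.maxHeartbeats 800000 in
/-- discrete stability estimate (3.3) in the proof of Theorem 3.1.
Let `U₁, U₂` be real Banach spaces, `V` a real normed space with subspace `V_h`, and
`B : U₁ × U₂ → V*` continuous linear such that `B₁ x := B (x, 0)` is an isomorphism
(encoded by `e` with `e x = B (x, 0)`).  Let `U_h ⊆ U₁ × U₂` be a subspace on which
the discrete stability `‖B w_h‖_{V*} ≤ C_F ‖B w_h‖_{V_h*}` holds, where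
`‖F‖_{V_h*}` is the operator norm of the restriction of `F` to `V_h`.  Then there is
`C > 0` such that every `(x, y) ∈ U_h` satisfies
`(‖x‖² + ‖y‖²)^{1/2} ≤ C (‖B (x, y)‖_{V_h*} + ‖y‖)`. -/
theorem stmt_6
    {U₁ U₂ V : Type*}
    [NormedAddCommGroup U₁] [NormedSpace ℝ U₁] [CompleteSpace U₁]
    [NormedAddCommGroup U₂] [NormedSpace ℝ U₂] [CompleteSpace U₂]
    [NormedAddCommGroup V] [NormedSpace ℝ V]
    (Vh : Submodule ℝ V)
    (B : (U₁ × U₂) →L[ℝ] (V →L[ℝ] ℝ)) (e : U₁ ≃L[ℝ] (V →L[ℝ] ℝ))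
    (he : ∀ x : U₁, e x = B (x, 0))
    (Uh : Submodule ℝ (U₁ × U₂))
    (CF : ℝ) (hCF : 0 < CF)
    (hstab : ∀ wh ∈ Uh, ‖B wh‖ ≤ CF * ‖(B wh).comp Vh.subtypeL‖) :
    ∃ C > 0, ∀ wh ∈ Uh,
      Real.sqrt (‖wh.1‖ ^ 2 + ‖wh.2‖ ^ 2)
        ≤ C * (‖(B wh).comp Vh.subtypeL‖ + ‖wh.2‖) := by
  set M : ℝ := ‖(e.symm : (V →L[ℝ] ℝ) →L[ℝ] U₁)‖ with hM
  have hM0 : 0 ≤ M := by rw [hM]; exact ContinuousLinearMap.opNorm_nonneg _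
  refine ⟨M * CF + (M * ‖B‖ + 1), by positivity, ?_⟩
  rintro ⟨x, y⟩ hwh
  set s : ℝ := ‖(B (x, y)).comp Vh.subtypeL‖ with hs
  have hs0 : 0 ≤ s := by rw [hs]; exact ContinuousLinearMap.opNorm_nonneg _
  have hy0 : 0 ≤ ‖y‖ := norm_nonneg _
  -- bound ‖x‖
  have hx : ‖x‖ ≤ M * (CF * s + ‖B‖ * ‖y‖) := by
    have hxe : x = e.symm (B (x, 0)) := by
      rw [← he x]; simp
    have h1 : ‖x‖ ≤ M * ‖B (x, 0)‖ := by
      calc ‖x‖ = ‖e.symm (B (x, 0))‖ := by rw [← hxe]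
        _ ≤ M * ‖B (x, 0)‖ := (e.symm : (V →L[ℝ] ℝ) →L[ℝ] U₁).le_opNorm _
    have h2 : ‖B (x, 0)‖ ≤ ‖B (x, y)‖ + ‖B‖ * ‖y‖ := by
      have : B (x, 0) = B (x, y) - B (0, y) := by
        rw [← map_sub]; norm_num
      rw [this]
      calc ‖B (x, y) - B (0, y)‖ ≤ ‖B (x, y)‖ + ‖B (0, y)‖ := norm_sub_le _ _
        _ ≤ ‖B (x, y)‖ + ‖B‖ * ‖y‖ := by
            gcongr
            calc ‖B (0, y)‖ ≤ ‖B‖ * ‖((0 : U₁), y)‖ := B.le_opNorm _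
              _ = ‖B‖ * ‖y‖ := by
                  rw [Prod.norm_def]; simp
    have h3 : ‖B (x, y)‖ ≤ CF * s := hstab _ hwh
    calc ‖x‖ ≤ M * ‖B (x, 0)‖ := h1
      _ ≤ M * (CF * s + ‖B‖ * ‖y‖) := by
          apply mul_le_mul_of_nonneg_left _ hM0
          linarith
  have hsqrt : Real.sqrt (‖x‖ ^ 2 + ‖y‖ ^ 2) ≤ ‖x‖ + ‖y‖ := by
    rw [show (‖x‖ + ‖y‖) = Real.sqrt ((‖x‖ + ‖y‖) ^ 2) from
      (Real.sqrt_sq (by positivity)).symm]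
    apply Real.sqrt_le_sqrt
    nlinarith [norm_nonneg x, norm_nonneg y]
  have hB0 : (0:ℝ) ≤ ‖B‖ := ContinuousLinearMap.opNorm_nonneg _
  calc Real.sqrt (‖x‖ ^ 2 + ‖y‖ ^ 2) ≤ ‖x‖ + ‖y‖ := hsqrt
    _ ≤ M * (CF * s + ‖B‖ * ‖y‖) + ‖y‖ := by linarith
    _ ≤ (M * CF + (M * ‖B‖ + 1)) * (s + ‖y‖) := by nlinarith [mul_nonneg (mul_nonneg hM0 hCF.le) hy0, mul_nonneg (mul_nonneg hM0 hB0) hs0]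
end

section
/- Let H be a real Hilbert space, X and Y real normed spaces, U := X × Y × H × H with norm ‖(x,y,s,t)‖_U = (‖x‖²+‖y‖²+‖s‖²+‖t‖²)^{1/2}, V a real normed space, V_h ⊆ V a subspace, L ∈ V*, B : U → V* a continuous linear map, ι : X → H a continuous linear map with ‖ι x‖ ≤ C_P ‖x‖ for all x ∈ X, and ρ, γ : H → H Lipschitz maps with constants L_ρ, L_γ. Let U_h ⊆ U be a subspace and define J(w) := ‖Bw − L‖_{V_h*}² + ‖ρ(ι w₁) − w₃‖² + ‖γ(ι w₁) − w₄‖² for w = (w₁,w₂,w₃,w₄) ∈ U. Assume: (a) discrete stability: there is C_s > 0 with ‖(x,y,s,t)‖_U ≤ C_s (‖B(x,y,s,t)‖_{V_h*} + ‖s‖ + ‖t‖) for all (x,y,s,t) ∈ U_h; (b) there is u = (x*, y*, q, r) ∈ U with B u = L, q = ρ(ι x*), r = γ(ι x*); (c) u_h = (x_h, y_h, q_h, r_h) ∈ U_h satisfies J(u_h) ≤ J(w_h) for all w_h ∈ U_h. Then there is a constant C > 0, depending only on C_s, ‖B‖, L_ρ, L_γ and C_P, such that for all w_h ∈ U_h: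 ‖u − u_h‖_U ≤ C (‖u − w_h‖_U + ‖ι(x* − x_h)‖_H). (This is the error bound (3.8) in the proof of Theorem 3.1, prior to absorbing the L₂ error term.) -/
/-! The discrete residual of the minimizer `u_h` is bounded by that of any competitor
`w_h ∈ U_h`, which in turn is `O(‖u - w_h‖)` because `u` has zero residual and `B`, `ρ ∘ ι`,
`γ ∘ ι` are Lipschitz. Discrete stability applied to `w_h - u_h ∈ U_h` then controls
`‖w_h - u_h‖_U` by these residuals, up to the term `‖ι (x* - x_h)‖` which appears when the
nonlinear constraints `q = ρ (ι x*)`, `r = γ (ι x*)` are compared with their discrete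
counterparts at `x_h`. The triangle inequality finishes the proof. -/

noncomputable section

section L2Norm

variable {E F G K : Type*} [SeminormedAddCommGroup E] [SeminormedAddCommGroup F]
  [SeminormedAddCommGroup G] [SeminormedAddCommGroup K]

def l2Norm (w : E × F × G × K) : ℝ :=
  √(‖w.1‖ ^ 2 + ‖w.2.1‖ ^ 2 + ‖w.2.2.1‖ ^ 2 + ‖w.2.2.2‖ ^ 2)

lemma norm_snd_snd_fst_le (w : E × F × G × K) : ‖w.2.2.1‖ ≤ ‖w‖ :=
  (norm_fst_le _).trans ((norm_snd_le _).trans (norm_snd_le _))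

lemma norm_snd_snd_snd_le (w : E × F × G × K) : ‖w.2.2.2‖ ≤ ‖w‖ :=
  (norm_snd_le _).trans ((norm_snd_le _).trans (norm_snd_le _))

lemma norm_le_l2Norm (w : E × F × G × K) : ‖w‖ ≤ l2Norm w := by
  have := sq_nonneg ‖w.1‖
  have := sq_nonneg ‖w.2.1‖
  have := sq_nonneg ‖w.2.2.1‖
  have := sq_nonneg ‖w.2.2.2‖
  simp only [Prod.norm_def, max_le_iff]
  refine ⟨?_, ?_, ?_, ?_⟩ <;> exact Real.le_sqrt_of_sq_le (by linarith)

lemma l2Norm_add_le (v w : E × F × G × K) : l2Norm (v + w) ≤ l2Norm v + l2Norm w := by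
  have minkowski := norm_add_le (E := EuclideanSpace ℝ (Fin 4))
    (WithLp.toLp 2 ![‖v.1‖, ‖v.2.1‖, ‖v.2.2.1‖, ‖v.2.2.2‖])
    (WithLp.toLp 2 ![‖w.1‖, ‖w.2.1‖, ‖w.2.2.1‖, ‖w.2.2.2‖])
  simp only [EuclideanSpace.norm_eq, Fin.sum_univ_four, Real.norm_eq_abs, sq_abs] at minkowski
  calc l2Norm (v + w)
      ≤ √((‖v.1‖ + ‖w.1‖) ^ 2 + (‖v.2.1‖ + ‖w.2.1‖) ^ 2 + (‖v.2.2.1‖ + ‖w.2.2.1‖) ^ 2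
          + (‖v.2.2.2‖ + ‖w.2.2.2‖) ^ 2) := by
        unfold l2Norm
        gcongr <;> exact norm_add_le _ _
    _ ≤ l2Norm v + l2Norm w := minkowski

end L2Norm

lemma LipschitzWith.norm_apply_sub_le {E F : Type*} [SeminormedAddCommGroup E]
    [SeminormedAddCommGroup F] {f : E → F} {K : NNReal} (hf : LipschitzWith K f)
    (x y : E) (z : F) : ‖f x - z‖ ≤ K * ‖x - y‖ + ‖f y - z‖ :=
  (norm_sub_le_norm_sub_add_norm_sub _ (f y) _).trans (by gcongr; exact hf.norm_sub_le x y)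

lemma sqrt_sq_add_sq_add_sq_le {a b c : ℝ} (ha : 0 ≤ a) (hb : 0 ≤ b) (hc : 0 ≤ c) :
    √(a ^ 2 + b ^ 2 + c ^ 2) ≤ a + b + c :=
  Real.sqrt_le_iff.mpr
    ⟨by positivity, by nlinarith [mul_nonneg ha hb, mul_nonneg ha hc, mul_nonneg hb hc]⟩

lemma add_add_le_three_mul_sqrt (a b c : ℝ) : a + b + c ≤ 3 * √(a ^ 2 + b ^ 2 + c ^ 2) := by
  have ha : a ≤ √(a ^ 2 + b ^ 2 + c ^ 2) := Real.le_sqrt_of_sq_le (by nlinarith)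
  have hb : b ≤ √(a ^ 2 + b ^ 2 + c ^ 2) := Real.le_sqrt_of_sq_le (by nlinarith)
  have hc : c ≤ √(a ^ 2 + b ^ 2 + c ^ 2) := Real.le_sqrt_of_sq_le (by nlinarith)
  linarith

section LeastSquares

variable {X Y H V : Type*} [SeminormedAddCommGroup X] [NormedSpace ℝ X]
  [SeminormedAddCommGroup Y] [NormedSpace ℝ Y] [SeminormedAddCommGroup H] [NormedSpace ℝ H]
  [SeminormedAddCommGroup V] [NormedSpace ℝ V]
  (Vh : Submodule ℝ V) (B : (X × Y × H × H) →L[ℝ] (V →L[ℝ] ℝ)) (L : V →L[ℝ] ℝ)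
  (ι : X →L[ℝ] H) (ρ γ : H → H)

def lsqFunctional (w : X × Y × H × H) : ℝ :=
  ‖(B w - L).comp Vh.subtypeL‖ ^ 2 + ‖ρ (ι w.1) - w.2.2.1‖ ^ 2 + ‖γ (ι w.1) - w.2.2.2‖ ^ 2

/-- The right-hand side of the discrete stability estimate (a). -/
def stabilityNorm (w : X × Y × H × H) : ℝ :=
  ‖(B w).comp Vh.subtypeL‖ + ‖w.2.2.1‖ + ‖w.2.2.2‖

variable {Vh B L ι ρ γ}

lemma norm_apply_comp_subtypeL_le (w : X × Y × H × H) : ‖(B w).comp Vh.subtypeL‖ ≤ ‖B‖ * ‖w‖ :=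
  calc ‖(B w).comp Vh.subtypeL‖ ≤ ‖B w‖ * ‖Vh.subtypeL‖ := (B w).opNorm_comp_le _
    _ ≤ ‖B w‖ := mul_le_of_le_one_right (norm_nonneg _) (Submodule.norm_subtypeL_le Vh)
    _ ≤ ‖B‖ * ‖w‖ := B.le_opNorm w

lemma stabilityNorm_add_le (v w : X × Y × H × H) :
    stabilityNorm Vh B (v + w) ≤ stabilityNorm Vh B v + stabilityNorm Vh B w := by
  unfold stabilityNorm
  simp only [map_add, ContinuousLinearMap.add_comp, Prod.snd_add, Prod.fst_add]
  linarith [norm_add_le ((B v).comp Vh.subtypeL) ((B w).comp Vh.subtypeL),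
    norm_add_le v.2.2.1 w.2.2.1, norm_add_le v.2.2.2 w.2.2.2]

lemma stabilityNorm_le (w : X × Y × H × H) : stabilityNorm Vh B w ≤ (‖B‖ + 2) * ‖w‖ := by
  unfold stabilityNorm
  linarith [norm_apply_comp_subtypeL_le (Vh := Vh) (B := B) w, norm_snd_snd_fst_le w,
    norm_snd_snd_snd_le w]

variable {Lρ Lγ : NNReal} (hρ : LipschitzWith Lρ ρ) (hγ : LipschitzWith Lγ γ)
  {u : X × Y × H × H} (hBu : B u = L) (hq : u.2.2.1 = ρ (ι u.1)) (hr : u.2.2.2 = γ (ι u.1))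
include hρ hγ hBu hq hr

lemma sqrt_lsqFunctional_le (w : X × Y × H × H) :
    √(lsqFunctional Vh B L ι ρ γ w) ≤ (‖B‖ + (Lρ + Lγ) * ‖ι‖ + 2) * ‖w - u‖ := by
  have hι : ‖ι (w.1 - u.1)‖ ≤ ‖ι‖ * ‖w - u‖ :=
    (ι.le_opNorm _).trans (by gcongr; exact norm_fst_le (w - u))
  have h3 : ‖u.2.2.1 - w.2.2.1‖ ≤ ‖w - u‖ := norm_sub_rev w.2.2.1 _ ▸ norm_snd_snd_fst_le (w - u)
  have h4 : ‖u.2.2.2 - w.2.2.2‖ ≤ ‖w - u‖ := norm_sub_rev w.2.2.2 _ ▸ norm_snd_snd_snd_le (w - u)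
  have hB : ‖(B w - L).comp Vh.subtypeL‖ ≤ ‖B‖ * ‖w - u‖ := by
    rw [← hBu, ← map_sub]; exact norm_apply_comp_subtypeL_le _
  have hρw := hρ.norm_apply_sub_le (ι w.1) (ι u.1) w.2.2.1
  have hγw := hγ.norm_apply_sub_le (ι w.1) (ι u.1) w.2.2.2
  rw [← map_sub, ← hq] at hρw
  rw [← map_sub, ← hr] at hγw
  unfold lsqFunctional
  refine le_trans (sqrt_sq_add_sq_add_sq_le (norm_nonneg ((B w - L).comp Vh.subtypeL))
    (norm_nonneg _) (norm_nonneg _)) ?_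
  linarith [mul_le_mul_of_nonneg_left hι Lρ.coe_nonneg,
    mul_le_mul_of_nonneg_left hι Lγ.coe_nonneg]

lemma stabilityNorm_sub_le (v : X × Y × H × H) :
    stabilityNorm Vh B (u - v)
      ≤ (Lρ + Lγ) * ‖ι (u.1 - v.1)‖ + 3 * √(lsqFunctional Vh B L ι ρ γ v) := by
  have hB : (B (u - v)).comp Vh.subtypeL = -((B v - L).comp Vh.subtypeL) := by
    rw [map_sub, hBu, ← neg_sub, ContinuousLinearMap.neg_comp]
  have hρv := hρ.norm_apply_sub_le (ι u.1) (ι v.1) v.2.2.1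
  have hγv := hγ.norm_apply_sub_le (ι u.1) (ι v.1) v.2.2.2
  rw [← map_sub, ← hq] at hρv
  rw [← map_sub, ← hr] at hγv
  have := add_add_le_three_mul_sqrt ‖(B v - L).comp Vh.subtypeL‖ ‖ρ (ι v.1) - v.2.2.1‖
    ‖γ (ι v.1) - v.2.2.2‖
  unfold stabilityNorm lsqFunctional
  rw [hB, norm_neg ((B v - L).comp Vh.subtypeL), Prod.snd_sub, Prod.snd_sub, Prod.fst_sub,
    Prod.snd_sub]
  linarith

end LeastSquares

end

theorem stmt_8_general
    {X Y H V : Type*}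
    [NormedAddCommGroup X] [NormedSpace ℝ X]
    [NormedAddCommGroup Y] [NormedSpace ℝ Y]
    [NormedAddCommGroup H] [InnerProductSpace ℝ H]
    [NormedAddCommGroup V] [NormedSpace ℝ V]
    (Vh : Submodule ℝ V)
    (B : (X × Y × H × H) →L[ℝ] (V →L[ℝ] ℝ)) (L : V →L[ℝ] ℝ)
    (ι : X →L[ℝ] H)
    (ρ γ : H → H) (Lρ Lγ : NNReal) (hρ : LipschitzWith Lρ ρ) (hγ : LipschitzWith Lγ γ)
    (Uh : Submodule ℝ (X × Y × H × H))
    (J : (X × Y × H × H) → ℝ)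
    (hJ : ∀ w : X × Y × H × H,
      J w = ‖(B w - L).comp Vh.subtypeL‖ ^ 2
        + ‖ρ (ι w.1) - w.2.2.1‖ ^ 2 + ‖γ (ι w.1) - w.2.2.2‖ ^ 2)
    (Cs : ℝ) (hCs : 0 < Cs)
    (hstab : ∀ w ∈ Uh,
      Real.sqrt (‖w.1‖ ^ 2 + ‖w.2.1‖ ^ 2 + ‖w.2.2.1‖ ^ 2 + ‖w.2.2.2‖ ^ 2)
        ≤ Cs * (‖(B w).comp Vh.subtypeL‖ + ‖w.2.2.1‖ + ‖w.2.2.2‖))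
    (u : X × Y × H × H) (hBu : B u = L)
    (hq : u.2.2.1 = ρ (ι u.1)) (hr : u.2.2.2 = γ (ι u.1))
    (uh : X × Y × H × H) (huh : uh ∈ Uh)
    (hmin : ∀ wh ∈ Uh, J uh ≤ J wh) :
    ∃ C > 0, ∀ wh ∈ Uh,
      Real.sqrt (‖(u - uh).1‖ ^ 2 + ‖(u - uh).2.1‖ ^ 2
          + ‖(u - uh).2.2.1‖ ^ 2 + ‖(u - uh).2.2.2‖ ^ 2)
        ≤ C * (Real.sqrt (‖(u - wh).1‖ ^ 2 + ‖(u - wh).2.1‖ ^ 2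
          + ‖(u - wh).2.2.1‖ ^ 2 + ‖(u - wh).2.2.2‖ ^ 2) + ‖ι (u.1 - uh.1)‖) := by
  obtain rfl : J = lsqFunctional Vh B L ι ρ γ := funext hJ
  set M := ‖B‖ + (Lρ + Lγ) * ‖ι‖ + 2
  have hM : 0 ≤ ‖B‖ + 2 + 3 * M := by positivity
  refine ⟨1 + Cs * (‖B‖ + 2 + 3 * M + (Lρ + Lγ)), by positivity, fun wh hwh => ?_⟩
  change l2Norm (u - uh)
    ≤ (1 + Cs * (‖B‖ + 2 + 3 * M + (Lρ + Lγ))) * (l2Norm (u - wh) + ‖ι (u.1 - uh.1)‖)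
  have hD : ‖wh - u‖ ≤ l2Norm (u - wh) := norm_sub_rev wh u ▸ norm_le_l2Norm (u - wh)
  have hres : √(lsqFunctional Vh B L ι ρ γ uh) ≤ M * ‖wh - u‖ :=
    (Real.sqrt_le_sqrt (hmin wh hwh)).trans (sqrt_lsqFunctional_le hρ hγ hBu hq hr wh)
  have hstab_sub : stabilityNorm Vh B (wh - uh)
      ≤ (‖B‖ + 2) * ‖wh - u‖ + ((Lρ + Lγ) * ‖ι (u.1 - uh.1)‖ + 3 * (M * ‖wh - u‖)) :=
    calc stabilityNorm Vh B (wh - uh)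
        ≤ stabilityNorm Vh B (wh - u) + stabilityNorm Vh B (u - uh) :=
          sub_add_sub_cancel wh u uh ▸ stabilityNorm_add_le _ _
      _ ≤ _ := add_le_add (stabilityNorm_le _)
          ((stabilityNorm_sub_le hρ hγ hBu hq hr uh).trans (by gcongr))
  have hdisc : l2Norm (wh - uh)
      ≤ Cs * ((‖B‖ + 2 + 3 * M) * l2Norm (u - wh) + (Lρ + Lγ) * ‖ι (u.1 - uh.1)‖) := by
    refine (hstab _ (Uh.sub_mem hwh huh)).trans (mul_le_mul_of_nonneg_left
      (?_ : stabilityNorm Vh B (wh - uh) ≤ _) hCs.le)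
    linarith [mul_le_mul_of_nonneg_left hD hM]
  calc l2Norm (u - uh) ≤ l2Norm (u - wh) + l2Norm (wh - uh) :=
        sub_add_sub_cancel u wh uh ▸ l2Norm_add_le _ _
    _ ≤ _ := by
      have hE := norm_nonneg (ι (u.1 - uh.1))
      have hD0 := (norm_nonneg _).trans hD
      linarith [mul_nonneg hCs.le (mul_nonneg hM hE),
        mul_nonneg hCs.le (mul_nonneg (add_nonneg Lρ.coe_nonneg Lγ.coe_nonneg) hD0)]

/-- error bound (3.8) in the proof of Theorem 3.1.
`U := X × Y × H × H` with the ℓ²-product norm, `V_h ⊆ V`, `B : U → V*` continuous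
linear, `L ∈ V*`, `ι : X → H` continuous linear with `‖ι x‖ ≤ C_P ‖x‖`, and
`ρ, γ : H → H` Lipschitz.  Assume discrete stability (a) on the subspace `U_h`,
that `u = (x*, y*, q, r)` solves the problem (b), and that `u_h ∈ U_h` minimizes the
residual functional `J` over `U_h` (c).  Then there is `C > 0` such that
`‖u − u_h‖_U ≤ C (‖u − w_h‖_U + ‖ι (x* − x_h)‖)` for all `w_h ∈ U_h`. -/
theorem stmt_8
    {X Y H V : Type*}
    [NormedAddCommGroup X] [NormedSpace ℝ X]
    [NormedAddCommGroup Y] [NormedSpace ℝ Y]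
    [NormedAddCommGroup H] [InnerProductSpace ℝ H] [CompleteSpace H]
    [NormedAddCommGroup V] [NormedSpace ℝ V]
    (Vh : Submodule ℝ V)
    (B : (X × Y × H × H) →L[ℝ] (V →L[ℝ] ℝ)) (L : V →L[ℝ] ℝ)
    (ι : X →L[ℝ] H) (CP : ℝ) (hι : ∀ x : X, ‖ι x‖ ≤ CP * ‖x‖)
    (ρ γ : H → H) (Lρ Lγ : NNReal) (hρ : LipschitzWith Lρ ρ) (hγ : LipschitzWith Lγ γ)
    (Uh : Submodule ℝ (X × Y × H × H))
    (J : (X × Y × H × H) → ℝ)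
    (hJ : ∀ w : X × Y × H × H,
      J w = ‖(B w - L).comp Vh.subtypeL‖ ^ 2
        + ‖ρ (ι w.1) - w.2.2.1‖ ^ 2 + ‖γ (ι w.1) - w.2.2.2‖ ^ 2)
    (Cs : ℝ) (hCs : 0 < Cs)
    (hstab : ∀ w ∈ Uh,
      Real.sqrt (‖w.1‖ ^ 2 + ‖w.2.1‖ ^ 2 + ‖w.2.2.1‖ ^ 2 + ‖w.2.2.2‖ ^ 2)
        ≤ Cs * (‖(B w).comp Vh.subtypeL‖ + ‖w.2.2.1‖ + ‖w.2.2.2‖))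
    (u : X × Y × H × H) (hBu : B u = L)
    (hq : u.2.2.1 = ρ (ι u.1)) (hr : u.2.2.2 = γ (ι u.1))
    (uh : X × Y × H × H) (huh : uh ∈ Uh)
    (hmin : ∀ wh ∈ Uh, J uh ≤ J wh) :
    ∃ C > 0, ∀ wh ∈ Uh,
      Real.sqrt (‖(u - uh).1‖ ^ 2 + ‖(u - uh).2.1‖ ^ 2
          + ‖(u - uh).2.2.1‖ ^ 2 + ‖(u - uh).2.2.2‖ ^ 2)
        ≤ C * (Real.sqrt (‖(u - wh).1‖ ^ 2 + ‖(u - wh).2.1‖ ^ 2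
          + ‖(u - wh).2.2.1‖ ^ 2 + ‖(u - wh).2.2.2‖ ^ 2) + ‖ι (u.1 - uh.1)‖) :=
  stmt_8_general Vh B L ι ρ γ Lρ Lγ hρ hγ Uh J hJ Cs hCs hstab u hBu hq hr uh huh hmin
end
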